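/- A pair of hash functions (h_1,h_2) allows storing a key set S according to the cuckoo hashing rules (each key x placed in cell h_1(x) of table 1 or cell h_2(x) of table 2, all cells storing at most one key) if and only if every connected component of the bipartite cuckoo multigraph G(S,h_1,h_2) contains at most one cycle, i.e., has cyclomatic number at most 1. -/

import Mathlib

/-!
Multigraphs are modeled by a map `ends : E → Sym2 V` assigning to each edge its
pair of endpoints.  Subgraphs are given by subsets `F : Finset E` of edges
(together with their incident vertices; isolated vertices are disregarded).
-/

open Finset

variable {V E : Type*}

-- Vertices incident to at least one edge of `F` (isolated vertices disregarded).
open Classical in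
noncomputable def vertsOf [Fintype V] (ends : E → Sym2 V) (F : Finset E) : Finset V :=
  Finset.univ.filter fun v => ∃ e ∈ F, v ∈ ends e

-- Degree of `v` in the multigraph with edge set `F` (loops count twice).
open Classical in
noncomputable def degIn (ends : E → Sym2 V) (F : Finset E) (v : V) : ℕ :=
  2 * (F.filter fun e => ends e = s(v, v)).card +
    (F.filter fun e => v ∈ ends e ∧ ends e ≠ s(v, v)).card

/-- Adjacency via an edge of `F`. -/
def adjIn (ends : E → Sym2 V) (F : Finset E) (v w : V) : Prop :=
  ∃ e ∈ F, ends e = s(v, w)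

/-- The multigraph with edge set `F` is connected (on its non-isolated vertices). -/
def connIn [Fintype V] (ends : E → Sym2 V) (F : Finset E) : Prop :=
  ∀ v ∈ vertsOf ends F, ∀ w ∈ vertsOf ends F, Relation.ReflTransGen (adjIn ends F) v w

/-- The bipartite cuckoo multigraph `G(S,h₁,h₂)`: keys are the edges, each key
`x` joins the left copy of `h₁(x)` with the right copy of `h₂(x)`. -/
def cuckooEnds {K : Type*} {m : ℕ} (h1 h2 : K → Fin m) : K → Sym2 (Fin m ⊕ Fin m) :=
  fun x => s(Sum.inl (h1 x), Sum.inr (h2 x))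

/-!
By Hall's theorem the placement exists iff every key set `F` meets at least `|F|` cells, i.e.
`|F| ≤ |V(F)|` in the cuckoo graph. Both sides of this inequality are additive over the
connected components of `F`, which share no vertices, so it suffices to check connected `F`.
-/

open Relation

section Multigraph

variable (ends : E → Sym2 V)

instance (F : Finset E) : Std.Symm (adjIn ends F) where
  symm _ _ := fun ⟨e, he, hvw⟩ => ⟨e, he, hvw.trans Sym2.eq_swap⟩

theorem reflTransGen_adjIn_of_mem_ends {F : Finset E} {e : E} (he : e ∈ F) {v w : V}
    (hv : v ∈ ends e) (hw : w ∈ ends e) : ReflTransGen (adjIn ends F) v w := by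
  induction h : ends e using Sym2.ind with
  | _ a b =>
    rw [h, Sym2.mem_iff] at hv hw
    have hab : adjIn ends F a b := ⟨e, he, h⟩
    rcases hv with rfl | rfl <;> rcases hw with rfl | rfl
    exacts [.refl, .single hab, .single (Std.Symm.symm _ _ hab), .refl]

open Classical in
noncomputable def edgeComponent (F : Finset E) (a : V) : Finset E :=
  {f ∈ F | ∃ v ∈ ends f, ReflTransGen (adjIn ends F) a v}

variable {ends} {F : Finset E} {a : V}

theorem mem_edgeComponent {f : E} :
    f ∈ edgeComponent ends F a ↔ f ∈ F ∧ ∃ v ∈ ends f, ReflTransGen (adjIn ends F) a v := by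
  simp [edgeComponent]

theorem edgeComponent_subset : edgeComponent ends F a ⊆ F :=
  fun _ hf => (mem_edgeComponent.1 hf).1

theorem mem_edgeComponent_of_reflTransGen {f : E} (hf : f ∈ F) {v : V} (hv : v ∈ ends f)
    (hav : ReflTransGen (adjIn ends F) a v) : f ∈ edgeComponent ends F a :=
  mem_edgeComponent.2 ⟨hf, v, hv, hav⟩

theorem reflTransGen_adjIn_edgeComponent {v : V} (hav : ReflTransGen (adjIn ends F) a v) :
    ReflTransGen (adjIn ends (edgeComponent ends F a)) a v := by
  induction hav with
  | refl => exact .refl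
  | @tail u w hau huw ih =>
    obtain ⟨f, hf, hends⟩ := huw
    have hu : u ∈ ends f := hends ▸ Sym2.mem_mk_left u w
    exact ih.tail ⟨f, mem_edgeComponent_of_reflTransGen hf hu hau, hends⟩

variable [Fintype V]

@[simp]
theorem mem_vertsOf {v : V} : v ∈ vertsOf ends F ↔ ∃ e ∈ F, v ∈ ends e := by
  simp [vertsOf]

theorem vertsOf_union [DecidableEq V] [DecidableEq E] (F G : Finset E) :
    vertsOf ends (F ∪ G) = vertsOf ends F ∪ vertsOf ends G := by
  ext v
  simp only [mem_vertsOf, mem_union, or_and_right, exists_or]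

theorem reflTransGen_of_mem_vertsOf_edgeComponent {v : V}
    (hv : v ∈ vertsOf ends (edgeComponent ends F a)) : ReflTransGen (adjIn ends F) a v := by
  obtain ⟨f, hf, hvf⟩ := mem_vertsOf.1 hv
  obtain ⟨hfF, u, hu, hau⟩ := mem_edgeComponent.1 hf
  exact hau.trans (reflTransGen_adjIn_of_mem_ends ends hfF hu hvf)

theorem connIn_edgeComponent : connIn ends (edgeComponent ends F a) := fun _ hv _ hw =>
  (Std.Symm.symm _ _ (reflTransGen_adjIn_edgeComponent
    (reflTransGen_of_mem_vertsOf_edgeComponent hv))).trans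
    (reflTransGen_adjIn_edgeComponent (reflTransGen_of_mem_vertsOf_edgeComponent hw))

theorem disjoint_vertsOf_edgeComponent_sdiff [DecidableEq E] :
    Disjoint (vertsOf ends (edgeComponent ends F a))
      (vertsOf ends (F \ edgeComponent ends F a)) := by
  refine disjoint_left.2 fun v hvC hvD => ?_
  obtain ⟨g, hg, hvg⟩ := mem_vertsOf.1 hvD
  exact (mem_sdiff.1 hg).2 (mem_edgeComponent_of_reflTransGen (mem_sdiff.1 hg).1 hvg
    (reflTransGen_of_mem_vertsOf_edgeComponent hvC))

variable (ends) in
theorem card_le_card_vertsOf_of_connIn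
    (h : ∀ F : Finset E, connIn ends F → #F ≤ #(vertsOf ends F)) (F : Finset E) :
    #F ≤ #(vertsOf ends F) := by
  classical
  induction F using Finset.strongInduction with
  | _ F ih =>
    obtain rfl | ⟨e, he⟩ := F.eq_empty_or_nonempty
    · simp
    induction hab : ends e using Sym2.ind with
    | _ a b =>
      set C := edgeComponent ends F a
      have heC : e ∈ C :=
        mem_edgeComponent_of_reflTransGen he (hab ▸ Sym2.mem_mk_left a b) .refl
      have hrest := ih (F \ C) (sdiff_ssubset edgeComponent_subset ⟨e, heC⟩)
      calc #F = #(F \ C) + #C := (card_sdiff_add_card_eq_card edgeComponent_subset).symm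
        _ ≤ #(vertsOf ends (F \ C)) + #(vertsOf ends C) :=
          add_le_add hrest (h C connIn_edgeComponent)
        _ = #(vertsOf ends F) := by
          rw [← card_union_of_disjoint disjoint_vertsOf_edgeComponent_sdiff.symm, ← vertsOf_union,
            sdiff_union_of_subset edgeComponent_subset]

end Multigraph

theorem vertsOf_cuckooEnds {K : Type*} {m : ℕ} (h1 h2 : K → Fin m) (F : Finset K) :
    vertsOf (cuckooEnds h1 h2) F = F.biUnion fun x => {Sum.inl (h1 x), Sum.inr (h2 x)} := by
  ext v
  simp [cuckooEnds]

theorem cuckoo_suitable_iff_components_at_most_one_cycle_general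
    {K : Type*} (m : ℕ) (h1 h2 : K → Fin m) :
    (∃ σ : K → Fin m ⊕ Fin m, Function.Injective σ ∧
        ∀ x : K, σ x = Sum.inl (h1 x) ∨ σ x = Sum.inr (h2 x)) ↔
      ∀ F : Finset K, connIn (cuckooEnds h1 h2) F →
        F.card ≤ (vertsOf (cuckooEnds h1 h2) F).card := by
  have hall := all_card_le_biUnion_card_iff_exists_injective fun x : K =>
    ({Sum.inl (h1 x), Sum.inr (h2 x)} : Finset (Fin m ⊕ Fin m))
  simp only [mem_insert, mem_singleton, ← vertsOf_cuckooEnds] at hall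
  rw [← hall]
  exact ⟨fun h F _ => h F, card_le_card_vertsOf_of_connIn _⟩

/-- `(h₁, h₂)` is suitable for the key set (there is an
injective placement `σ` with `σ(x) ∈ {T₁[h₁(x)], T₂[h₂(x)]}`) iff every
connected component of `G(S,h₁,h₂)` has at most one cycle, i.e. every connected
edge subset `F` has cyclomatic number at most 1 (`|F| ≤ |V(F)|`). -/
theorem cuckoo_suitable_iff_components_at_most_one_cycle
    {K : Type*} [Fintype K] [DecidableEq K] (m : ℕ) (h1 h2 : K → Fin m) :
    (∃ σ : K → Fin m ⊕ Fin m, Function.Injective σ ∧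
        ∀ x : K, σ x = Sum.inl (h1 x) ∨ σ x = Sum.inr (h2 x)) ↔
      ∀ F : Finset K, connIn (cuckooEnds h1 h2) F →
        F.card ≤ (vertsOf (cuckooEnds h1 h2) F).card :=
  cuckoo_suitable_iff_components_at_most_one_cycle_general m h1 h2
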